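/- For every natural number n ≥ 1, ∑_{i=1}^{n} H_i·H_{n−i} = (n+1)[(H_{n+1}² − H_{n+1}^{(2)}) − 2(H_{n+1} − 1)], where H_k is the k-th harmonic number, H_0 = 0, and H_k^{(2)} is the k-th harmonic number of order 2. -/

import Mathlib

open Finset
noncomputable def H (n : ℕ) : ℝ := ∑ i ∈ Finset.Icc 1 n, (1:ℝ)/i
noncomputable def H2 (n : ℕ) : ℝ := ∑ i ∈ Finset.Icc 1 n, (1:ℝ)/(i:ℝ)^2

/-!
Write `S n = ∑_{i+j=n} H_i H_j` (the term `i = 0` vanishes). Since `H_{j+1} = H_j + 1/(j+1)`, the sum grows by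
`S (n+1) - S n = ∑_{i+j=n} H_i/(j+1)`, and the same trick shows that this increment grows by
`∑_{i+j=n} 1/((i+1)(j+1)) = 2 H_{n+1}/(n+2)` (partial fractions and the symmetry `i ↔ j`).
That is also the increment of `H_{n+1}² - H^{(2)}_{n+1} = 2 ∑_{j<k≤n+1} 1/(jk)`, so
`S (n+1) - S n = H_{n+1}² - H^{(2)}_{n+1}`, which is the increment of the closed form.
-/

open Finset.Nat

lemma H_zero : H 0 = 0 := by simp [H]

lemma H_succ (n : ℕ) : H (n + 1) = H n + 1 / ((n : ℝ) + 1) := by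
  rw [H, H, sum_Icc_succ_top (by omega)]; push_cast; ring

lemma H2_succ (n : ℕ) : H2 (n + 1) = H2 n + 1 / ((n : ℝ) + 1) ^ 2 := by
  rw [H2, H2, sum_Icc_succ_top (by omega)]; push_cast; ring

lemma sq_H_sub_H2_succ (n : ℕ) :
    H (n + 1) ^ 2 - H2 (n + 1) = H n ^ 2 - H2 n + 2 * H n / ((n : ℝ) + 1) := by
  rw [H_succ, H2_succ]; field_simp; ring

lemma sum_antidiagonal_inv_fst_succ (n : ℕ) :
    ∑ p ∈ antidiagonal n, 1 / ((p.1 : ℝ) + 1) = H (n + 1) := by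
  induction n with
  | zero => simp [H]
  | succ n ih => rw [sum_antidiagonal_succ', ih, H_succ (n + 1)]; push_cast; ring

lemma sum_antidiagonal_inv_succ_mul_inv_succ (n : ℕ) :
    ∑ p ∈ antidiagonal n, 1 / (((p.1 : ℝ) + 1) * ((p.2 : ℝ) + 1))
      = 2 * H (n + 1) / ((n : ℝ) + 2) := by
  have partial_fractions : ∀ p ∈ antidiagonal n, 1 / (((p.1 : ℝ) + 1) * ((p.2 : ℝ) + 1))
      = (1 / ((p.1 : ℝ) + 1) + 1 / ((p.swap.1 : ℝ) + 1)) / ((n : ℝ) + 2) := by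
    intro p hp
    have hsum : (p.1 : ℝ) + p.2 = n := by exact_mod_cast mem_antidiagonal.mp hp
    rw [Prod.fst_swap, ← hsum]
    field_simp
    ring
  rw [sum_congr rfl partial_fractions, ← sum_div, sum_add_distrib,
    sum_antidiagonal_swap (f := fun p : ℕ × ℕ => 1 / ((p.1 : ℝ) + 1)),
    sum_antidiagonal_inv_fst_succ]
  ring

lemma sum_antidiagonal_H_div_succ (n : ℕ) :
    ∑ p ∈ antidiagonal n, H p.1 / ((p.2 : ℝ) + 1) = H (n + 1) ^ 2 - H2 (n + 1) := by
  induction n with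
  | zero => simp [H, H2]
  | succ n ih =>
    have step : ∀ p ∈ antidiagonal n, H (p.1 + 1) / ((p.2 : ℝ) + 1)
        = H p.1 / ((p.2 : ℝ) + 1) + 1 / (((p.1 : ℝ) + 1) * ((p.2 : ℝ) + 1)) := by
      intro p _
      rw [H_succ]; field_simp
    rw [sum_antidiagonal_succ, H_zero, zero_div, zero_add, sum_congr rfl step, sum_add_distrib,
      ih, sum_antidiagonal_inv_succ_mul_inv_succ, sq_H_sub_H2_succ (n + 1)]
    push_cast
    ring

lemma sum_antidiagonal_H_mul_H (n : ℕ) :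
    ∑ p ∈ antidiagonal n, H p.1 * H p.2
      = ((n : ℝ) + 1) * ((H (n + 1) ^ 2 - H2 (n + 1)) - 2 * (H (n + 1) - 1)) := by
  induction n with
  | zero => simp [H, H2]
  | succ n ih =>
    have step : ∀ p ∈ antidiagonal n, H p.1 * H (p.2 + 1)
        = H p.1 * H p.2 + H p.1 / ((p.2 : ℝ) + 1) := by
      intro p _
      rw [H_succ]; ring
    rw [sum_antidiagonal_succ', H_zero, mul_zero, zero_add, sum_congr rfl step, sum_add_distrib, ih,
      sum_antidiagonal_H_div_succ, sq_H_sub_H2_succ (n + 1), H_succ (n + 1)]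
    push_cast
    field_simp
    ring

theorem stmt8_general (n : ℕ) :
    ∑ i ∈ Icc 1 n, H i * H (n-i)
      = ((n:ℝ)+1)*(((H (n+1))^2 - H2 (n+1)) - 2*(H (n+1) - 1)) := by
  rw [← sum_antidiagonal_H_mul_H, sum_antidiagonal_eq_sum_range_succ (fun i j => H i * H j),
    range_eq_Ico, sum_eq_sum_Ico_succ_bot n.succ_pos]
  simp only [H_zero, zero_mul, zero_add, Nat.succ_eq_add_one, Ico_add_one_right_eq_Icc]

theorem stmt8 (n : ℕ) (hn : 1 ≤ n) :
    ∑ i ∈ Icc 1 n, H i * H (n-i)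
      = ((n:ℝ)+1)*(((H (n+1))^2 - H2 (n+1)) - 2*(H (n+1) - 1)) :=
  stmt8_general n
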